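/- Let X, Y be disjoint sets of unordered pairs over Fin k. The pair (X, Y) is (k,2)-unacceptable—i.e., the convex hulls of {(e(a)+e(b))/2 : {a,b} ∈ X} and {(e(a)+e(b))/2 : {a,b} ∈ Y} intersect—if and only if the two-colored multigraph Gr(X,Y) contains an alternating closed walk. -/

import Mathlib

/-!
If `p` lies in both hulls, write it as a convex combination of dark edge points and of light edge
points. A vertex `s` has `p s > 0` exactly when it lies on a dark edge of positive weight, and
exactly when it lies on a light edge of positive weight; so from every vertex of the support of `p`
a dark edge and a light edge lead back into the support. Alternately following such edges in the
finite vertex set must revisit a vertex at an even time, closing an alternating walk. Conversely,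
along an alternating closed walk of length `2m` the dark and the light edge points have the same
sum, since each vertex is counted once by an incoming and once by an outgoing edge; dividing by
`m` gives a common point of the two hulls.
-/

/-- An alternating closed walk in the two-coloured multigraph with dark edge set
`X` and light edge set `Y` (edges are size-2 multisets, so self-loops are
allowed): a closed walk of even length whose edges alternate between `X` and
`Y`, including at the return to the start. -/
def IsAltClosedWalk {S : Type*} [DecidableEq S] (X Y : Finset (Multiset S)) : Prop :=
  ∃ m : ℕ, 0 < m ∧ ∃ v : ℕ → S, v (2 * m) = v 0 ∧
    ∀ i < 2 * m, ({v i, v (i + 1)} : Multiset S) ∈ (if i % 2 = 0 then X else Y)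

/-- The point of the simplex associated with an edge `{a, b}`:
`(e(a) + e(b)) / 2`. -/
noncomputable def edgePoint {k : ℕ} (e : Multiset (Fin k)) : Fin k → ℝ :=
  (2 : ℝ)⁻¹ • (e.map (fun s => Pi.single s (1 : ℝ))).sum

open Finset

theorem Multiset.exists_eq_pair_of_mem_of_card_eq_two {α : Type*} {e : Multiset α} {a : α}
    (he : Multiset.card e = 2) (ha : a ∈ e) : ∃ b, e = {a, b} := by
  obtain ⟨x, y, rfl⟩ := Multiset.card_eq_two.mp he
  rcases Multiset.mem_cons.mp ha with rfl | ha
  · exact ⟨y, rfl⟩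
  · rw [Multiset.mem_singleton.mp ha]
    exact ⟨x, Multiset.pair_comm _ _⟩

theorem Finset.apply_sum_smul_pos_iff {ι : Type*} {T : Finset (ι → ℝ)} {w : (ι → ℝ) → ℝ}
    (hw : ∀ q ∈ T, 0 ≤ w q) (hT : ∀ q ∈ T, 0 ≤ q) (s : ι) :
    0 < (∑ q ∈ T, w q • q) s ↔ ∃ q ∈ T, 0 < w q ∧ 0 < q s := by
  rw [Finset.sum_apply]
  simp only [Pi.smul_apply, smul_eq_mul]
  rw [Finset.sum_pos_iff_of_nonneg fun q hq => mul_nonneg (hw q hq) (hT q hq s)]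
  refine exists_congr fun q => and_congr_right fun hq => ⟨fun h => ?_, fun ⟨hwq, hqs⟩ => mul_pos hwq hqs⟩
  have hwq : 0 < w q := (hw q hq).lt_of_ne <| by rintro h0; simp [← h0] at h
  exact ⟨hwq, (mul_pos_iff_of_pos_left hwq).mp h⟩

section Walks

variable {S : Type*} [DecidableEq S] {X Y : Finset (Multiset S)}

theorem isAltClosedWalk_of_apply_eq {v : ℕ → S}
    (hv : ∀ i, ({v i, v (i + 1)} : Multiset S) ∈ (if i % 2 = 0 then X else Y))
    {a b : ℕ} (hab : a < b) (heq : v (2 * a) = v (2 * b)) : IsAltClosedWalk X Y := by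
  refine ⟨b - a, by omega, fun i => v (2 * a + i), ?_, fun i _ => ?_⟩
  · change v (2 * a + 2 * (b - a)) = v (2 * a + 0)
    rw [show 2 * a + 2 * (b - a) = 2 * b by omega, add_zero]
    exact heq.symm
  · simpa only [show (2 * a + i) % 2 = i % 2 by omega, ← add_assoc] using hv (2 * a + i)

theorem isAltClosedWalk_of_alternating [Finite S] (v : ℕ → S)
    (hv : ∀ i, ({v i, v (i + 1)} : Multiset S) ∈ (if i % 2 = 0 then X else Y)) :
    IsAltClosedWalk X Y := by
  obtain ⟨a, b, hne, heq⟩ := Finite.exists_ne_map_eq_of_infinite fun n => v (2 * n)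
  rcases hne.lt_or_gt with hab | hba
  · exact isAltClosedWalk_of_apply_eq hv hab heq
  · exact isAltClosedWalk_of_apply_eq hv hba heq.symm

theorem isAltClosedWalk_of_forall_exists [Finite S] (A : Set S) (hA : A.Nonempty)
    (hX : ∀ a ∈ A, ∃ b ∈ A, ({a, b} : Multiset S) ∈ X)
    (hY : ∀ a ∈ A, ∃ b ∈ A, ({a, b} : Multiset S) ∈ Y) : IsAltClosedWalk X Y := by
  choose! f hfA hfX using hX
  choose! g hgA hgY using hY
  obtain ⟨a₀, ha₀⟩ := hA
  let v : ℕ → S := fun n => Nat.rec a₀ (fun i a => if i % 2 = 0 then f a else g a) n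
  have hv_succ (i : ℕ) : v (i + 1) = if i % 2 = 0 then f (v i) else g (v i) := rfl
  have hvA (i : ℕ) : v i ∈ A := by
    induction i with
    | zero => exact ha₀
    | succ i ih => rw [hv_succ]; split_ifs <;> simp [hfA, hgA, ih]
  refine isAltClosedWalk_of_alternating v fun i => ?_
  rw [hv_succ]
  split_ifs
  · exact hfX _ (hvA i)
  · exact hgY _ (hvA i)

end Walks

section EdgePoint

variable {k : ℕ}

theorem edgePoint_pair (a b : Fin k) :
    edgePoint ({a, b} : Multiset (Fin k)) = (2 : ℝ)⁻¹ • (Pi.single a 1 + Pi.single b 1) := by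
  simp [edgePoint, Multiset.insert_eq_cons]

theorem edgePoint_apply (e : Multiset (Fin k)) (s : Fin k) :
    edgePoint e s = (e.count s : ℝ) / 2 := by
  induction e using Multiset.induction with
  | empty => simp [edgePoint]
  | cons a e ih =>
    simp only [edgePoint, Multiset.map_cons, Multiset.sum_cons, smul_add, Pi.add_apply] at ih ⊢
    rw [ih, Multiset.count_cons, Pi.smul_apply, Pi.single_apply]
    split_ifs <;> push_cast <;> ring

theorem edgePoint_nonneg (e : Multiset (Fin k)) : 0 ≤ edgePoint e := fun s => by
  rw [edgePoint_apply]; positivity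

theorem edgePoint_apply_pos_iff {e : Multiset (Fin k)} {s : Fin k} :
    0 < edgePoint e s ↔ s ∈ e := by
  rw [edgePoint_apply, ← Multiset.count_pos, div_pos_iff_of_pos_right two_pos, Nat.cast_pos]

theorem exists_subset_forall_pos_apply_iff_of_mem_convexHull {Z : Finset (Multiset (Fin k))}
    {p : Fin k → ℝ} (hp : p ∈ convexHull ℝ (edgePoint '' (Z : Set (Multiset (Fin k))))) :
    ∃ W ⊆ Z, W.Nonempty ∧ ∀ s, 0 < p s ↔ ∃ e ∈ W, s ∈ e := by
  classical
  rw [← Finset.coe_image, Finset.mem_convexHull'] at hp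
  obtain ⟨w, hw₀, hw₁, rfl⟩ := hp
  refine ⟨Z.filter fun e => 0 < w (edgePoint e), filter_subset _ _, ?_, fun s => ?_⟩
  · obtain ⟨q, hq, hwq⟩ := Finset.exists_lt_of_sum_lt (f := fun _ => 0)
      (by simp [hw₁] : ∑ q ∈ Z.image edgePoint, (0 : ℝ) < ∑ q ∈ Z.image edgePoint, w q)
    obtain ⟨e, he, rfl⟩ := mem_image.mp hq
    exact ⟨e, mem_filter.mpr ⟨he, hwq⟩⟩
  · rw [Finset.apply_sum_smul_pos_iff hw₀ (forall_mem_image.mpr fun e _ => edgePoint_nonneg e)]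
    simp [edgePoint_apply_pos_iff, and_assoc]

variable {Z : Finset (Multiset (Fin k))} {p : Fin k → ℝ}

theorem exists_pos_apply_of_mem_convexHull (hZ : ∀ e ∈ Z, e ≠ 0)
    (hp : p ∈ convexHull ℝ (edgePoint '' (Z : Set (Multiset (Fin k))))) : ∃ s, 0 < p s := by
  obtain ⟨W, hWZ, ⟨e, he⟩, hpos⟩ := exists_subset_forall_pos_apply_iff_of_mem_convexHull hp
  obtain ⟨s, hs⟩ := Multiset.exists_mem_of_ne_zero (hZ e (hWZ he))
  exact ⟨s, (hpos s).mpr ⟨e, he, hs⟩⟩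

theorem exists_pair_mem_of_mem_convexHull (hZ : ∀ e ∈ Z, Multiset.card e = 2)
    (hp : p ∈ convexHull ℝ (edgePoint '' (Z : Set (Multiset (Fin k))))) {s : Fin k}
    (hs : 0 < p s) : ∃ u, 0 < p u ∧ ({s, u} : Multiset (Fin k)) ∈ Z := by
  obtain ⟨W, hWZ, -, hpos⟩ := exists_subset_forall_pos_apply_iff_of_mem_convexHull hp
  obtain ⟨e, he, hse⟩ := (hpos s).mp hs
  obtain ⟨u, rfl⟩ := Multiset.exists_eq_pair_of_mem_of_card_eq_two (hZ e (hWZ he)) hse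
  exact ⟨u, (hpos u).mpr ⟨_, he, by simp⟩, hWZ he⟩

theorem sum_edgePoint_even_eq_sum_edgePoint_odd (v : ℕ → Fin k) {m : ℕ}
    (hv : v (2 * m) = v 0) :
    ∑ i ∈ range m, edgePoint ({v (2 * i), v (2 * i + 1)} : Multiset (Fin k)) =
      ∑ i ∈ range m, edgePoint ({v (2 * i + 1), v (2 * i + 2)} : Multiset (Fin k)) := by
  let g : ℕ → Fin k → ℝ := fun i => (2 : ℝ)⁻¹ • Pi.single (v (2 * i)) 1
  have hstep (i : ℕ) : edgePoint ({v (2 * i), v (2 * i + 1)} : Multiset (Fin k)) -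
      edgePoint ({v (2 * i + 1), v (2 * i + 2)} : Multiset (Fin k)) = g i - g (i + 1) := by
    simp only [edgePoint_pair, g, smul_add, show 2 * (i + 1) = 2 * i + 2 by ring]
    abel
  rw [← sub_eq_zero, ← sum_sub_distrib, sum_congr rfl fun i _ => hstep i, sum_range_sub']
  simp [g, hv]

end EdgePoint

theorem exists_mem_convexHull_inter_of_isAltClosedWalk {k : ℕ} {X Y : Finset (Multiset (Fin k))}
    (h : IsAltClosedWalk X Y) :
    ∃ p : Fin k → ℝ, p ∈ convexHull ℝ (edgePoint '' (X : Set (Multiset (Fin k)))) ∧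
      p ∈ convexHull ℝ (edgePoint '' (Y : Set (Multiset (Fin k)))) := by
  obtain ⟨m, hm, v, hclose, hedge⟩ := h
  have hull {Z : Finset (Multiset (Fin k))} {z : ℕ → Fin k → ℝ}
      (hz : ∀ i ∈ range m, z i ∈ edgePoint '' (Z : Set (Multiset (Fin k)))) :
      (range m).centerMass (fun _ => (1 : ℝ)) z ∈ convexHull ℝ (edgePoint '' (Z : Set _)) :=
    centerMass_mem_convexHull _ (fun _ _ => zero_le_one) (by simp [hm]) hz
  refine ⟨(range m).centerMass (fun _ => 1) fun i => edgePoint {v (2 * i), v (2 * i + 1)},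
    hull fun i hi => ⟨_, ?_, rfl⟩, ?_⟩
  · simpa using hedge (2 * i) (by simp at hi; omega)
  · convert hull (z := fun i => edgePoint {v (2 * i + 1), v (2 * i + 2)})
      (fun i hi => ⟨_, ?_, rfl⟩) using 1
    · simp only [Finset.centerMass, one_smul, sum_edgePoint_even_eq_sum_edgePoint_odd v hclose]
    · have := hedge (2 * i + 1) (by simp at hi; omega)
      rwa [if_neg (by omega)] at this

theorem stmt_14_general (k : ℕ) (X Y : Finset (Multiset (Fin k)))
    (hcard : ∀ e ∈ X ∪ Y, Multiset.card e = 2) :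
    (∃ p : Fin k → ℝ, p ∈ convexHull ℝ (edgePoint '' (X : Set (Multiset (Fin k)))) ∧
      p ∈ convexHull ℝ (edgePoint '' (Y : Set (Multiset (Fin k))))) ↔
    IsAltClosedWalk X Y := by
  refine ⟨fun ⟨p, hpX, hpY⟩ => ?_, exists_mem_convexHull_inter_of_isAltClosedWalk⟩
  have hcardX : ∀ e ∈ X, Multiset.card e = 2 := fun e he => hcard e (mem_union_left _ he)
  have hcardY : ∀ e ∈ Y, Multiset.card e = 2 := fun e he => hcard e (mem_union_right _ he)
  exact isAltClosedWalk_of_forall_exists {s | 0 < p s}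
    (exists_pos_apply_of_mem_convexHull
      (fun e he => Multiset.card_pos.mp (by rw [hcardX e he]; norm_num)) hpX)
    (fun _ => exists_pair_mem_of_mem_convexHull hcardX hpX)
    (fun _ => exists_pair_mem_of_mem_convexHull hcardY hpY)

/-- a pair `(X, Y)` is `(k,2)`-unacceptable (the convex hulls of
the associated edge-point sets intersect) iff `Gr(X,Y)` has an alternating
closed walk. -/
theorem stmt_14 (k : ℕ) (X Y : Finset (Multiset (Fin k))) (hXY : Disjoint X Y)
    (hcard : ∀ e ∈ X ∪ Y, Multiset.card e = 2) :
    (∃ p : Fin k → ℝ, p ∈ convexHull ℝ (edgePoint '' (X : Set (Multiset (Fin k)))) ∧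
      p ∈ convexHull ℝ (edgePoint '' (Y : Set (Multiset (Fin k))))) ↔
    IsAltClosedWalk X Y :=
  stmt_14_general k X Y hcard
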